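/- arXiv:1501.00875 — 2 statements merged into one kernel-verified Lean document; each statement's English description precedes it below -/
import Mathlib

section
/- For a Radon probability measure μ on ℝ^d, the lower Hausdorff dimension dim_* μ (the essential infimum over μ of the lower local dimension) equals the infimum of Hausdorff dimensions of Borel sets of positive μ-measure: dim_* μ = inf{dim_H A : μ(A) > 0}. -/
open MeasureTheory Set Filter

/-- The lower local dimension of a measure at a point:
`liminf_{r→0⁺} log μ(B(x,r)) / log r`. -/
noncomputable def lowerLocalDim {d : ℕ} (μ : Measure (EuclideanSpace ℝ (Fin d)))
    (x : EuclideanSpace ℝ (Fin d)) : ℝ :=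
  liminf (fun r : ℝ => Real.log (μ (Metric.ball x r)).toReal / Real.log r) (nhdsWithin 0 (Ioi 0))

/-- The lower Hausdorff dimension of a measure: the essential infimum over `μ`
of the lower local dimension, expressed as the supremum of `s` such that the
lower local dimension is at least `s` almost everywhere. -/
noncomputable def dimStar {d : ℕ} (μ : Measure (EuclideanSpace ℝ (Fin d))) : ℝ :=
  sSup {s : ℝ | ∀ᵐ x ∂μ, s ≤ lowerLocalDim μ x}

/-!
If `μ(B(x,r)) ≤ r^t` for all small `r` at every point of a closed set `T`, then a set of
diameter `D < δ` meeting `T` at `x` lies in `B(x,r)` for all `r ∈ (D, δ)`, so its `μ|_T`-mass is at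
most `D^t`; hence `μ|_T ≤ μH[t]` (mass distribution principle). Points where the lower local
dimension exceeds `t` satisfy such a bound below some scale `1/(n+1)`, so every set of positive
measure has dimension at least `dim_* μ`.

Conversely, for `s > dim_* μ` the points with `lowerLocalDim μ x < s` carry positive mass, and
(outside two null sets: points with a null ball around them, and points where the ratio tends to
`+∞`) they see `μ(B(x,r)) > r^s` at arbitrarily small scales. A Vitali covering by disjoint balls
of this kind, enlarged fourfold, bounds `μH[s]` of this `G_δ` set by `8^s μ(ℝ^d) < ∞`, so its
dimension is at most `s`.
-/

open Metric Topology
open scoped ENNReal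

theorem Filter.eventually_ge_of_not_isCoboundedUnder {α β : Type*} [LinearOrder β]
    {l : Filter α} {u : α → β} (h : ¬ l.IsCoboundedUnder (· ≥ ·) u) (b : β) :
    ∀ᶠ x in l, b ≤ u x := by
  by_contra hb
  exact h ⟨b, fun a ha => not_lt.1 fun hba => hb (ha.mono fun x hx => hba.le.trans hx)⟩

theorem isGδ_setOf_frequently {X ι : Type*} [TopologicalSpace X] {l : Filter ι}
    [l.IsCountablyGenerated] {P : X → ι → Prop} (hP : ∀ i, IsOpen {x | P x i}) :
    IsGδ {x | ∃ᶠ i in l, P x i} := by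
  obtain ⟨s, hs⟩ := l.exists_antitone_basis
  have : {x | ∃ᶠ i in l, P x i} = ⋂ n, ⋃ i ∈ s n, {x | P x i} := by
    ext x
    simp [hs.toHasBasis.frequently_iff]
  rw [this]
  exact .iInter_of_isOpen fun n => isOpen_biUnion fun i _ => hP i

theorem dimH_le_finrank {E : Type*} [NormedAddCommGroup E] [NormedSpace ℝ E]
    [FiniteDimensional ℝ E] (s : Set E) : dimH s ≤ Module.finrank ℝ E :=
  (dimH_mono (subset_univ s)).trans_eq (Real.dimH_univ_eq_finrank E)

section MeasureOfBalls

variable {X : Type*} [MetricSpace X] [MeasurableSpace X] (μ : Measure X)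

theorem isOpen_setOf_lt_measure_ball (c : ℝ≥0∞) (r : ℝ) : IsOpen {x | c < μ (ball x r)} := by
  refine Metric.isOpen_iff.2 fun x hx => ?_
  rcases le_or_gt r 0 with hr | hr
  · simp [ball_eq_empty.2 hr] at hx
  obtain ⟨u, hu_mono, hu, hu_lim⟩ := exists_seq_strictMono_tendsto' hr
  have hunion : ⋃ n, ball x (u n) = ball x r := by
    ext y
    simp only [mem_iUnion, mem_ball]
    exact ⟨fun ⟨n, hn⟩ => hn.trans (hu n).2,
      fun hy => (hu_lim.eventually (lt_mem_nhds hy)).exists⟩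
  have hlim : Tendsto (fun n => μ (ball x (u n))) atTop (𝓝 (μ (ball x r))) :=
    hunion ▸ tendsto_measure_iUnion_atTop fun m n hmn => ball_subset_ball (hu_mono.monotone hmn)
  obtain ⟨n, hn⟩ := (hlim.eventually (lt_mem_nhds hx)).exists
  refine ⟨r - u n, sub_pos.2 (hu n).2, fun y hy => hn.trans_le (measure_mono ?_)⟩
  refine ball_subset_ball' ?_
  rw [mem_ball, dist_comm] at hy
  linarith

theorem isClosed_setOf_forall_measure_ball_le (I : Set ℝ) (g : ℝ → ℝ≥0∞) :
    IsClosed {x | ∀ r ∈ I, μ (ball x r) ≤ g r} := by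
  have : {x | ∀ r ∈ I, μ (ball x r) ≤ g r} = ⋂ r ∈ I, {x | g r < μ (ball x r)}ᶜ := by
    ext x
    simp
  rw [this]
  exact isClosed_biInter fun r _ => (isOpen_setOf_lt_measure_ball μ (g r) r).isClosed_compl

theorem ae_forall_measure_ball_ne_zero [HereditarilyLindelofSpace X] :
    ∀ᵐ x ∂μ, ∀ r > 0, μ (ball x r) ≠ 0 := by
  filter_upwards [μ.support_mem_ae] with x hx r hr
  exact ((Measure.mem_support_iff_forall x).1 hx _ (ball_mem_nhds x hr)).ne'

end MeasureOfBalls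

section MassDistribution

variable {X : Type*} [MetricSpace X] [MeasurableSpace X] [BorelSpace X] {μ : Measure X}

theorem restrict_le_hausdorffMeasure_of_measure_ball_le {t δ : ℝ} (hδ : 0 < δ) {T : Set X}
    (hT : MeasurableSet T) (h : ∀ x ∈ T, ∀ r ∈ Ioo 0 δ, μ (ball x r) ≤ ENNReal.ofReal r ^ t) :
    μ.restrict T ≤ μH[t] := by
  refine Measure.le_hausdorffMeasure t _ (ENNReal.ofReal (δ / 2)) (by simpa using hδ)
    fun s hs => ?_
  rw [Measure.restrict_apply' hT]
  rcases (s ∩ T).eq_empty_or_nonempty with hempty | ⟨x, hxs, hxT⟩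
  · simp [hempty]
  have hediam : ediam s = ENNReal.ofReal (diam s) :=
    (ENNReal.ofReal_toReal (hs.trans_lt ENNReal.ofReal_lt_top).ne).symm
  have hdiam : diam s < δ := by
    have := ENNReal.toReal_le_of_le_ofReal (by positivity) hs
    exact this.trans_lt (by linarith)
  have hbound : ∀ r ∈ Ioo (diam s) δ, μ (s ∩ T) ≤ ENNReal.ofReal r ^ t := by
    refine fun r hr => (measure_mono fun y hy => ?_).trans
      (h x hxT r ⟨diam_nonneg.trans_lt hr.1, hr.2⟩)
    have hbdd : Bornology.IsBounded s :=
      isBounded_iff_ediam_ne_top.2 (hediam ▸ ENNReal.ofReal_ne_top)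
    exact mem_ball.2 ((dist_le_diam_of_mem hbdd hy.1 hxs).trans_lt hr.1)
  have hcont : Tendsto (fun r => ENNReal.ofReal r ^ t) (𝓝[>] diam s)
      (𝓝 (ENNReal.ofReal (diam s) ^ t)) :=
    ((ENNReal.continuous_rpow_const.comp ENNReal.continuous_ofReal).tendsto _).mono_left
      nhdsWithin_le_nhds
  rw [hediam]
  exact ge_of_tendsto hcont (eventually_of_mem (Ioo_mem_nhdsGT hdiam) hbound)

theorem le_dimH_of_forall_eventually_measure_ball_le {t : ℝ} {A : Set X} (hA : μ A ≠ 0)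
    (h : ∀ x ∈ A, ∀ᶠ r in 𝓝[>] 0, μ (ball x r) ≤ ENNReal.ofReal r ^ t) :
    ENNReal.ofReal t ≤ dimH A := by
  set T : ℕ → Set X := fun n =>
    {x | ∀ r ∈ Ioo 0 (1 / (n + 1 : ℝ)), μ (ball x r) ≤ ENNReal.ofReal r ^ t}
  have hcover : A ⊆ ⋃ n, A ∩ T n := by
    intro x hx
    obtain ⟨ε, hε, hball⟩ := (nhdsGT_basis (0 : ℝ)).eventually_iff.1 (h x hx)
    obtain ⟨n, hn⟩ := exists_nat_one_div_lt hε
    exact mem_iUnion.2 ⟨n, hx, fun r hr => hball ⟨hr.1, hr.2.trans hn⟩⟩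
  obtain ⟨n, hn⟩ : ∃ n, μ (A ∩ T n) ≠ 0 := by
    by_contra! hnull
    exact hA (measure_mono_null hcover (measure_iUnion_null hnull))
  have hTn : μ.restrict (T n) ≤ μH[t] :=
    restrict_le_hausdorffMeasure_of_measure_ball_le Nat.one_div_pos_of_nat
      (isClosed_setOf_forall_measure_ball_le μ _ _).measurableSet fun x hx => hx
  have hH : μH[t] A ≠ 0 := fun h0 =>
    hn (le_zero_iff.1 ((Measure.le_restrict_apply _ _).trans
      ((Measure.le_iff'.1 hTn A).trans h0.le)))
  rcases lt_or_ge t 0 with ht | ht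
  · simp [ENNReal.ofReal_of_nonpos ht.le]
  · exact le_dimH_of_hausdorffMeasure_ne_zero (d := t.toNNReal) (by rwa [Real.coe_toNNReal t ht])

end MassDistribution

section VitaliCovering

variable {X : Type*} [MetricSpace X] [MeasurableSpace X] {μ : Measure X}

theorem exists_countable_closedBall_cover_of_rpow_le_measure_ball [OpensMeasurableSpace X]
    [IsFiniteMeasure μ] {s δ : ℝ} {A : Set X}
    (h : ∀ x ∈ A, ∃ r ∈ Ioo 0 δ, ENNReal.ofReal r ^ s ≤ μ (ball x r)) :
    ∃ (u : Set X) (ρ : X → ℝ), u.Countable ∧ A ⊆ ⋃ x : u, closedBall (x : X) (4 * ρ x) ∧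
      (∀ x ∈ u, ρ x ∈ Ioo 0 δ) ∧ ∑' x : u, ENNReal.ofReal (ρ x) ^ s ≤ μ univ := by
  choose! ρ hρ hρμ using h
  obtain ⟨u, huA, hdisj, hcover⟩ :=
    Vitali.exists_disjoint_subfamily_covering_enlargement_closedBall A id ρ δ
      (fun x hx => (hρ x hx).2.le) 4 (by norm_num)
  have hdisj' : Pairwise (Function.onFun Disjoint fun x : u => ball (x : X) (ρ x)) :=
    fun x y hxy => (hdisj x.2 y.2 (Subtype.coe_injective.ne hxy)).mono
      ball_subset_closedBall ball_subset_closedBall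
  have hpos : ∀ x ∈ u, 0 < μ (ball x (ρ x)) := fun x hx =>
    (ENNReal.rpow_pos (ENNReal.ofReal_pos.2 (hρ x (huA hx)).1) ENNReal.ofReal_ne_top).trans_le
      (hρμ x (huA hx))
  refine ⟨u, ρ, ?_, fun x hx => ?_, fun x hx => hρ x (huA hx), ?_⟩
  · have := Measure.countable_meas_pos_of_disjoint_iUnion (μ := μ)
      (fun x : u => measurableSet_ball) hdisj'
    rw [eq_univ_of_forall (s := {x : u | 0 < μ (ball (x : X) (ρ x))}) fun x => hpos x x.2,
      countable_univ_iff] at this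
    exact countable_coe_iff.1 this
  · obtain ⟨y, hy, hsub⟩ := hcover x hx
    exact mem_iUnion.2 ⟨⟨y, hy⟩, hsub (mem_closedBall_self (hρ x hx).1.le)⟩
  · calc ∑' x : u, ENNReal.ofReal (ρ x) ^ s ≤ ∑' x : u, μ (ball (x : X) (ρ x)) :=
          ENNReal.tsum_le_tsum fun x => hρμ x (huA x.2)
      _ ≤ μ univ := tsum_measure_le_measure_univ (fun _ => measurableSet_ball.nullMeasurableSet)
          fun x y hxy => (hdisj' hxy).aedisjoint

theorem hausdorffMeasure_le_of_forall_frequently_rpow_le_measure_ball [BorelSpace X]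
    [IsFiniteMeasure μ] {s : ℝ} (hs : 0 ≤ s) {A : Set X}
    (h : ∀ x ∈ A, ∃ᶠ r in 𝓝[>] 0, ENNReal.ofReal r ^ s ≤ μ (ball x r)) :
    μH[s] A ≤ 8 ^ s * μ univ := by
  have hscale (n : ℕ) : ∀ x ∈ A, ∃ r ∈ Ioo 0 (1 / (n + 1 : ℝ)),
      ENNReal.ofReal r ^ s ≤ μ (ball x r) := fun x hx =>
    ((h x hx).and_eventually (Ioo_mem_nhdsGT Nat.one_div_pos_of_nat)).exists.imp
      fun r hr => ⟨hr.2, hr.1⟩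
  choose u ρ hu hcover hρ hsum using fun n =>
    exists_countable_closedBall_cover_of_rpow_le_measure_ball (hscale n)
  have (n : ℕ) : Countable (u n) := (hu n).to_subtype
  have hdiam (n : ℕ) (x : u n) :
      ediam (closedBall (x : X) (4 * ρ n x)) ≤ 8 * ENNReal.ofReal (ρ n x) := by
    have hρ0 : 0 ≤ ρ n x := (hρ n x x.2).1.le
    rw [← closedEBall_ofReal (by positivity), ENNReal.ofReal_mul (by norm_num)]
    refine ediam_closedEBall_le.trans_eq ?_
    norm_num [← mul_assoc]
  have hlim : Tendsto (fun n : ℕ => 8 * ENNReal.ofReal (1 / (n + 1))) atTop (𝓝 0) := by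
    simpa using ENNReal.Tendsto.const_mul
      (ENNReal.tendsto_ofReal tendsto_one_div_add_atTop_nhds_zero_nat) (Or.inr ENNReal.ofNat_ne_top)
  calc μH[s] A ≤ liminf (fun n => ∑' x : u n, ediam (closedBall (x : X) (4 * ρ n x)) ^ s) atTop :=
        Measure.hausdorffMeasure_le_liminf_tsum s A _ hlim _
          (.of_forall fun n x => (hdiam n x).trans (by gcongr; exact (hρ n x x.2).2.le))
          (.of_forall hcover)
    _ ≤ 8 ^ s * μ univ := by
      refine liminf_le_of_frequently_le' (.of_forall fun n => ?_)
      calc ∑' x : u n, ediam (closedBall (x : X) (4 * ρ n x)) ^ s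
          ≤ ∑' x : u n, 8 ^ s * ENNReal.ofReal (ρ n x) ^ s := by
            refine ENNReal.tsum_le_tsum fun x => ?_
            rw [← ENNReal.mul_rpow_of_nonneg _ _ hs]
            exact ENNReal.rpow_le_rpow (hdiam n x) hs
        _ ≤ 8 ^ s * μ univ := by
            rw [ENNReal.tsum_mul_left]
            gcongr
            exact hsum n

theorem dimH_le_of_forall_frequently_rpow_le_measure_ball [BorelSpace X] [IsFiniteMeasure μ]
    {s : ℝ} (hs : 0 ≤ s) {A : Set X}
    (h : ∀ x ∈ A, ∃ᶠ r in 𝓝[>] 0, ENNReal.ofReal r ^ s ≤ μ (ball x r)) :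
    dimH A ≤ ENNReal.ofReal s := by
  refine dimH_le_of_hausdorffMeasure_ne_top (d := s.toNNReal) ?_
  rw [Real.coe_toNNReal s hs]
  exact ne_top_of_le_ne_top (ENNReal.mul_ne_top (ENNReal.rpow_ne_top_of_nonneg hs (by simp))
    (measure_ne_top μ univ)) (hausdorffMeasure_le_of_forall_frequently_rpow_le_measure_ball hs h)

end VitaliCovering

section LocalDimRatio

variable {X : Type*} [MetricSpace X] [MeasurableSpace X] {μ : Measure X} {x : X} {r t : ℝ}

noncomputable def localDimRatio (μ : Measure X) (x : X) (r : ℝ) : ℝ :=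
  Real.log (μ (ball x r)).toReal / Real.log r

theorem rpow_lt_measure_ball_iff [IsFiniteMeasure μ] (hr : r ∈ Ioo 0 1) (hμ : μ (ball x r) ≠ 0) :
    ENNReal.ofReal r ^ t < μ (ball x r) ↔ localDimRatio μ x r < t := by
  have hm : 0 < (μ (ball x r)).toReal := ENNReal.toReal_pos hμ (measure_ne_top μ _)
  rw [localDimRatio, div_lt_iff_of_neg (Real.log_neg hr.1 hr.2), ENNReal.ofReal_rpow_of_pos hr.1,
    ENNReal.ofReal_lt_iff_lt_toReal (Real.rpow_nonneg hr.1.le t) (measure_ne_top μ _),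
    ← Real.log_lt_log_iff (Real.rpow_pos_of_pos hr.1 t) hm, Real.log_rpow hr.1]

theorem measure_ball_le_rpow_of_le_localDimRatio [IsFiniteMeasure μ] (hr : r ∈ Ioo 0 1)
    (h : t ≤ localDimRatio μ x r) : μ (ball x r) ≤ ENNReal.ofReal r ^ t := by
  rcases eq_or_ne (μ (ball x r)) 0 with h0 | h0
  · simp [h0]
  · exact not_lt.1 fun hlt => h.not_gt ((rpow_lt_measure_ball_iff hr h0).1 hlt)

theorem eventually_measure_ball_le_of_eventually_le_localDimRatio [IsFiniteMeasure μ]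
    (h : ∀ᶠ r in 𝓝[>] 0, t ≤ localDimRatio μ x r) :
    ∀ᶠ r in 𝓝[>] 0, μ (ball x r) ≤ ENNReal.ofReal r ^ t := by
  filter_upwards [h, Ioo_mem_nhdsGT one_pos] with r ht hr
  exact measure_ball_le_rpow_of_le_localDimRatio hr ht

theorem eventually_localDimRatio_nonneg [IsProbabilityMeasure μ] :
    ∀ᶠ r in 𝓝[>] 0, 0 ≤ localDimRatio μ x r := by
  filter_upwards [Ioo_mem_nhdsGT one_pos] with r hr
  exact div_nonneg_of_nonpos (Real.log_nonpos ENNReal.toReal_nonneg measureReal_le_one)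
    (Real.log_neg hr.1 hr.2).le

end LocalDimRatio

section LowerLocalDim

variable {d : ℕ} {μ : Measure (EuclideanSpace ℝ (Fin d))} {x : EuclideanSpace ℝ (Fin d)} {s t : ℝ}

theorem lowerLocalDim_eq_liminf :
    lowerLocalDim μ x = liminf (localDimRatio μ x) (𝓝[>] 0) := rfl

variable [IsProbabilityMeasure μ]

theorem lowerLocalDim_nonneg : 0 ≤ lowerLocalDim μ x := by
  rw [lowerLocalDim_eq_liminf]
  by_cases hcob : IsCoboundedUnder (· ≥ ·) (𝓝[>] 0) (localDimRatio μ x)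
  · exact le_liminf_of_le hcob eventually_localDimRatio_nonneg
  · rw [Real.liminf_of_not_isCoboundedUnder hcob]

theorem eventually_measure_ball_le_of_lt_lowerLocalDim (h : t < lowerLocalDim μ x) :
    ∀ᶠ r in 𝓝[>] 0, μ (ball x r) ≤ ENNReal.ofReal r ^ t :=
  eventually_measure_ball_le_of_eventually_le_localDimRatio <|
    (eventually_lt_of_lt_liminf h (isBoundedUnder_of_eventually_ge
      eventually_localDimRatio_nonneg)).mono fun _ => le_of_lt

theorem frequently_rpow_lt_measure_ball_of_lowerLocalDim_lt
    (hcob : IsCoboundedUnder (· ≥ ·) (𝓝[>] 0) (localDimRatio μ x))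
    (hpos : ∀ r > 0, μ (ball x r) ≠ 0) (h : lowerLocalDim μ x < s) :
    ∃ᶠ r in 𝓝[>] 0, ENNReal.ofReal r ^ s < μ (ball x r) :=
  ((frequently_lt_of_liminf_lt hcob h).and_eventually (Ioo_mem_nhdsGT one_pos)).mono
    fun r ⟨hlt, hr⟩ => (rpow_lt_measure_ball_iff hr (hpos r hr.1)).2 hlt

theorem ae_isCoboundedUnder_localDimRatio :
    ∀ᵐ x ∂μ, IsCoboundedUnder (· ≥ ·) (𝓝[>] 0) (localDimRatio μ x) := by
  -- where the ratio is not cobounded it tends to `+∞` (and `liminf` is the junk value `0`);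
  -- there `μ(B(x,r)) ≤ r^(d+1)` eventually, which no set of positive measure in `ℝ^d` allows
  by_contra hne
  have hdim := le_dimH_of_forall_eventually_measure_ball_le (t := (d + 1 : ℕ))
    (ae_iff.not.1 hne) fun x hx => eventually_measure_ball_le_of_eventually_le_localDimRatio
      (eventually_ge_of_not_isCoboundedUnder hx _)
  have := hdim.trans (dimH_le_finrank _)
  norm_num at this

theorem le_toReal_dimH_of_ae_le_lowerLocalDim (hs : ∀ᵐ x ∂μ, s ≤ lowerLocalDim μ x)
    {A : Set (EuclideanSpace ℝ (Fin d))} (hA : μ A ≠ 0) : s ≤ (dimH A).toReal := by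
  refine le_of_forall_lt_imp_le_of_dense fun t hts => ?_
  have hae : ∀ᵐ x ∂μ, ∀ᶠ r in 𝓝[>] 0, μ (ball x r) ≤ ENNReal.ofReal r ^ t := by
    filter_upwards [hs] with x hx
    exact eventually_measure_ball_le_of_lt_lowerLocalDim (hts.trans_le hx)
  have hA' : μ (A ∩ {x | ∀ᶠ r in 𝓝[>] 0, μ (ball x r) ≤ ENNReal.ofReal r ^ t}) ≠ 0 := by
    rwa [measure_inter_conull hae]
  have hdim := (le_dimH_of_forall_eventually_measure_ball_le hA' fun x hx => hx.2).trans
    (dimH_mono inter_subset_left)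
  have hfin : dimH A ≠ ∞ := ((dimH_le_finrank A).trans_lt (ENNReal.natCast_lt_top _)).ne
  exact (ENNReal.ofReal_le_iff_le_toReal hfin).1 hdim

end LowerLocalDim

theorem dimStar_eq_inf_dimH_general {d : ℕ} (μ : Measure (EuclideanSpace ℝ (Fin d)))
    [IsProbabilityMeasure μ] :
    dimStar μ = sInf {s : ℝ | ∃ A : Set (EuclideanSpace ℝ (Fin d)),
      MeasurableSet A ∧ 0 < μ A ∧ (dimH A).toReal = s} := by
  have hS : BddAbove {s : ℝ | ∀ᵐ x ∂μ, s ≤ lowerLocalDim μ x} :=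
    ⟨_, fun s hs => le_toReal_dimH_of_ae_le_lowerLocalDim hs (A := univ) (by simp)⟩
  refine le_antisymm (le_csInf ⟨_, univ, .univ, by simp, rfl⟩ ?_)
    (le_of_forall_gt_imp_ge_of_dense fun s hs => ?_)
  · rintro _ ⟨A, -, hA, rfl⟩
    exact Real.sSup_le (fun s hs => le_toReal_dimH_of_ae_le_lowerLocalDim hs hA.ne')
      ENNReal.toReal_nonneg
  have hs0 : 0 ≤ s := (le_csSup hS (ae_of_all _ fun _ => lowerLocalDim_nonneg)).trans hs.le
  have hμ : μ {x | lowerLocalDim μ x < s} ≠ 0 := fun h0 =>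
    hs.not_ge (le_csSup hS (by simpa [ae_iff] using h0))
  set A := {x | ∃ᶠ r in 𝓝[>] 0, ENNReal.ofReal r ^ s < μ (ball x r)}
  have hA : MeasurableSet A :=
    (isGδ_setOf_frequently fun r => isOpen_setOf_lt_measure_ball μ _ r).measurableSet
  have hsub : {x | lowerLocalDim μ x < s} ≤ᵐ[μ] A := by
    filter_upwards [ae_isCoboundedUnder_localDimRatio, ae_forall_measure_ball_ne_zero μ]
      with x hcob hpos hlt using frequently_rpow_lt_measure_ball_of_lowerLocalDim_lt hcob hpos hlt
  have hdim : dimH A ≤ ENNReal.ofReal s :=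
    dimH_le_of_forall_frequently_rpow_le_measure_ball hs0 fun x hx => hx.mono fun _ => le_of_lt
  have hAμ : 0 < μ A := pos_iff_ne_zero.2 fun h0 => hμ (measure_mono_null_ae hsub h0)
  refine le_trans (csInf_le ?_ ⟨A, hA, hAμ, rfl⟩) (ENNReal.toReal_le_of_le_ofReal hs0 hdim)
  exact ⟨0, by rintro _ ⟨B, -, -, rfl⟩; exact ENNReal.toReal_nonneg⟩

/-- For a Radon probability measure on `ℝ^d`, the lower Hausdorff dimension equals the
infimum of Hausdorff dimensions of Borel sets of positive measure. -/
theorem dimStar_eq_inf_dimH {d : ℕ} (μ : Measure (EuclideanSpace ℝ (Fin d)))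
    [IsProbabilityMeasure μ] [μ.InnerRegular] [IsFiniteMeasureOnCompacts μ] :
    dimStar μ = sInf {s : ℝ | ∃ A : Set (EuclideanSpace ℝ (Fin d)),
      MeasurableSet A ∧ 0 < μ A ∧ (dimH A).toReal = s} :=
  dimStar_eq_inf_dimH_general μ
end

section
/- Let B be a finite set of algebraic real numbers. Then there exists δ = δ(B) > 0 such that for every k and every x expressible as a polynomial expression of degree at most k in the elements of B with integer coefficients of bounded height (specifically, every x ∈ P_k(B), the set of values of polynomials with integer coefficients bounded by some fixed constant, of degree ≤ k, evaluated at elements of B), either x = 0 or |x| ≥ δ^k. -/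
/-!
Let `K = ℚ(B)`. After clearing denominators by a fixed integer `q`, the number
`y = q ^ k * P(b)` is an algebraic integer, and each of its conjugates `σ y = q ^ k * P(σ b)` has
absolute value at most `E ^ k` for a constant `E = E(B, C)`, because `P` has at most
`(k + 1) ^ #B ≤ 2 ^ (k #B)` monomials. If `y ≠ 0`,
its norm `∏ σ, σ y` is a nonzero integer, so `|y| ≥ E ^ (-k (d - 1))` with `d = [K : ℚ]`, that is
`|P(b)| ≥ δ ^ k` for `δ = (|q| * E ^ (d - 1))⁻¹`.
-/

open Finset

namespace MvPolynomial
variable {ι R : Type*}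

theorem degree_le_of_mem_support_of_totalDegree_le [CommSemiring R] {P : MvPolynomial ι R} {k : ℕ}
    (hP : P.totalDegree ≤ k) {m : ι →₀ ℕ} (hm : m ∈ P.support) : m.degree ≤ k :=
  (le_totalDegree hm).trans hP

theorem card_support_le_of_totalDegree_le [Fintype ι] [CommSemiring R] {P : MvPolynomial ι R}
    {k : ℕ} (hP : P.totalDegree ≤ k) : #P.support ≤ (k + 1) ^ Fintype.card ι := by
  classical
  calc #P.support ≤ #(Fintype.piFinset fun _ : ι => range (k + 1)) := by
        refine card_le_card_of_injOn (fun m i => m i) (fun m hm => ?_) DFunLike.coe_injective.injOn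
        simp only [Fintype.coe_piFinset, Set.mem_pi, mem_coe, mem_range]
        exact fun i _ => Nat.lt_succ_of_le <| (m.le_degree i).trans
          (degree_le_of_mem_support_of_totalDegree_le hP hm)
    _ = (k + 1) ^ Fintype.card ι := by simp

theorem _root_.norm_intCast_le_abs {A : Type*} [NormedRing A] [NormOneClass A] (c : ℤ) :
    ‖(c : A)‖ ≤ |(c : ℝ)| := by
  simpa [zsmul_one, Int.norm_eq_abs] using norm_zsmul_le c (1 : A)

theorem norm_aeval_le [Fintype ι] {A : Type*} [NormedCommRing A] [NormOneClass A]
    {g : ι → A} {M : ℝ} (hM : 1 ≤ M) (hg : ∀ i, ‖g i‖ ≤ M) {C : ℤ} {P : MvPolynomial ι ℤ}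
    {k : ℕ} (hP : P.totalDegree ≤ k) (hcoeff : ∀ m, |P.coeff m| ≤ C) :
    ‖aeval g P‖ ≤ (k + 1) ^ Fintype.card ι * C * M ^ k := by
  have hC : (0 : ℝ) ≤ C := by exact_mod_cast (abs_nonneg _).trans (hcoeff 0)
  have hterm : ∀ m ∈ P.support,
      ‖algebraMap ℤ A (P.coeff m) * ∏ i ∈ m.support, g i ^ m i‖ ≤ C * M ^ k := by
    intro m hm
    calc ‖algebraMap ℤ A (P.coeff m) * ∏ i ∈ m.support, g i ^ m i‖
        ≤ |((P.coeff m : ℤ) : ℝ)| * ∏ i ∈ m.support, ‖g i‖ ^ m i := by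
          refine (norm_mul_le _ _).trans (mul_le_mul ?_ ?_ (norm_nonneg _) (abs_nonneg _))
          · simpa using norm_intCast_le_abs (A := A) (P.coeff m)
          · exact (Finset.norm_prod_le _ _).trans (prod_le_prod (fun _ _ => norm_nonneg _)
              fun i _ => norm_pow_le _ _)
      _ ≤ C * ∏ i ∈ m.support, M ^ m i := by
          gcongr with i
          · exact_mod_cast hcoeff m
          · exact hg i
      _ = C * M ^ m.degree := by rw [prod_pow_eq_pow_sum]; rfl
      _ ≤ C * M ^ k := by
          gcongr
          exact degree_le_of_mem_support_of_totalDegree_le hP hm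
  rw [aeval_def, eval₂_eq]
  calc ‖∑ m ∈ P.support, algebraMap ℤ A (P.coeff m) * ∏ i ∈ m.support, g i ^ m i‖
      ≤ #P.support * (C * M ^ k) := by
        simpa using norm_sum_le_of_le P.support hterm
    _ ≤ (k + 1) ^ Fintype.card ι * (C * M ^ k) := by
        gcongr
        exact_mod_cast card_support_le_of_totalDegree_le hP
    _ = (k + 1) ^ Fintype.card ι * C * M ^ k := by ring

theorem map_aeval_int {A B : Type*} [CommRing A] [CommRing B] (φ : A →+* B) (g : ι → A)
    (P : MvPolynomial ι ℤ) : φ (aeval g P) = aeval (fun i => φ (g i)) P :=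
  comp_aeval_apply g φ.toIntAlgHom P

theorem one_le_norm_aeval_of_totalDegree_eq_zero {g : ι → ℂ} {P : MvPolynomial ι ℤ}
    (hP : P.totalDegree = 0) (h : aeval g P ≠ 0) : 1 ≤ ‖aeval g P‖ := by
  rw [totalDegree_eq_zero_iff_eq_C.mp hP, aeval_C, eq_intCast] at h ⊢
  rw [Complex.norm_intCast]
  exact_mod_cast Int.one_le_abs (by exact_mod_cast h)

theorem isIntegral_pow_mul_aeval {A : Type*} [CommRing R] [CommRing A]
    [Algebra R A] {c : A} (hc : IsIntegral R c) {b : ι → A} (hb : ∀ i, IsIntegral R (c * b i))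
    {P : MvPolynomial ι R} {k : ℕ} (hP : P.totalDegree ≤ k) :
    IsIntegral R (c ^ k * aeval b P) := by
  rw [aeval_def, eval₂_eq, mul_sum]
  refine IsIntegral.sum _ fun m hm => ?_
  have hdeg : m.degree ≤ k := degree_le_of_mem_support_of_totalDegree_le hP hm
  have hsplit : c ^ k * (algebraMap R A (P.coeff m) * ∏ i ∈ m.support, b i ^ m i) =
      algebraMap R A (P.coeff m) * (c ^ (k - m.degree) * ∏ i ∈ m.support, (c * b i) ^ m i) := by
    have hpow : c ^ k = c ^ (k - m.degree) * c ^ (∑ i ∈ m.support, m i) := by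
      rw [← pow_add]
      exact congrArg _ (Nat.sub_add_cancel hdeg).symm
    rw [prod_congr rfl fun i _ => mul_pow c (b i) (m i), prod_mul_distrib, prod_pow_eq_pow_sum,
      hpow]
    ring
  rw [hsplit]
  exact isIntegral_algebraMap.mul ((hc.pow _).mul (IsIntegral.prod _ fun i _ => (hb i).pow _))

end MvPolynomial

theorem add_one_pow_mul_mul_pow_le {n k : ℕ} (hk : k ≠ 0) {C M : ℝ} (hC : 1 ≤ C) (hM : 0 ≤ M) :
    (k + 1) ^ n * C * M ^ k ≤ (2 ^ n * C * M) ^ k := by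
  have hk2 : (k + 1 : ℝ) ≤ 2 ^ k := by exact_mod_cast Nat.lt_two_pow_self
  rw [mul_pow, mul_pow, ← pow_mul, mul_comm n k, pow_mul]
  have hCk : C ≤ C ^ k := le_self_pow₀ hC hk
  gcongr

theorem norm_intCast_pow_mul_aeval_le {K ι : Type*} [Field K] [Algebra ℚ K] [Fintype ι]
    {b : ι → K} (σ : K →ₐ[ℚ] ℂ) {M : ℝ} (hM1 : 1 ≤ M) (hM : ∀ i, ‖σ (b i)‖ ≤ M) (q : ℤ)
    {C : ℤ} (hC : 1 ≤ C) {k : ℕ} (hk : k ≠ 0) {P : MvPolynomial ι ℤ} (hP : P.totalDegree ≤ k)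
    (hcoeff : ∀ m, |P.coeff m| ≤ C) :
    ‖σ ((q : K) ^ k * MvPolynomial.aeval b P)‖ ≤ (|(q : ℝ)| * (2 ^ Fintype.card ι * C * M)) ^ k :=
  calc ‖σ ((q : K) ^ k * MvPolynomial.aeval b P)‖
      = |(q : ℝ)| ^ k * ‖MvPolynomial.aeval (fun i => σ (b i)) P‖ := by
        rw [map_mul, map_pow, map_intCast, norm_mul, norm_pow, Complex.norm_intCast,
          ← AlgHom.coe_toRingHom, MvPolynomial.map_aeval_int]
    _ ≤ |(q : ℝ)| ^ k * ((k + 1) ^ Fintype.card ι * C * M ^ k) := by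
        gcongr
        exact MvPolynomial.norm_aeval_le hM1 hM hP hcoeff
    _ ≤ |(q : ℝ)| ^ k * (2 ^ Fintype.card ι * C * M) ^ k := by
        gcongr
        exact add_one_pow_mul_mul_pow_le hk (by exact_mod_cast hC) (by positivity)
    _ = (|(q : ℝ)| * (2 ^ Fintype.card ι * C * M)) ^ k := (mul_pow _ _ _).symm

section NumberField

variable {K : Type*} [Field K] [Algebra ℚ K] [FiniteDimensional ℚ K]

theorem one_le_prod_norm_embeddings_of_isIntegral {y : K} (hy : IsIntegral ℤ y) (hy0 : y ≠ 0) :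
    1 ≤ ∏ σ : K →ₐ[ℚ] ℂ, ‖σ y‖ := by
  obtain ⟨z, hz⟩ := IsIntegrallyClosed.isIntegral_iff.mp (Algebra.isIntegral_norm ℚ hy)
  have hz0 : z ≠ 0 := by
    rintro rfl
    exact Algebra.norm_ne_zero_iff.mpr hy0 (by rw [← hz, map_zero])
  calc (1 : ℝ) ≤ |(z : ℝ)| := by exact_mod_cast Int.one_le_abs hz0
    _ = ‖algebraMap ℚ ℂ (Algebra.norm ℚ y)‖ := by
      rw [← hz]; simp only [eq_intCast, eq_ratCast, Rat.cast_intCast, Complex.norm_intCast]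
    _ = ∏ σ : K →ₐ[ℚ] ℂ, ‖σ y‖ := by rw [Algebra.norm_eq_prod_embeddings, norm_prod]

theorem one_le_norm_mul_pow_of_isIntegral {y : K} (hy : IsIntegral ℤ y) (hy0 : y ≠ 0) {S : ℝ}
    (hS : ∀ σ : K →ₐ[ℚ] ℂ, ‖σ y‖ ≤ S) (σ₀ : K →ₐ[ℚ] ℂ) :
    1 ≤ ‖σ₀ y‖ * S ^ (Module.finrank ℚ K - 1) := by
  classical
  calc (1 : ℝ) ≤ ∏ σ : K →ₐ[ℚ] ℂ, ‖σ y‖ := one_le_prod_norm_embeddings_of_isIntegral hy hy0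
    _ = ‖σ₀ y‖ * ∏ σ ∈ univ.erase σ₀, ‖σ y‖ := (mul_prod_erase _ _ (mem_univ σ₀)).symm
    _ ≤ ‖σ₀ y‖ * ∏ _σ ∈ univ.erase σ₀, S := by
        gcongr with σ
        exact hS σ
    _ = ‖σ₀ y‖ * S ^ (Module.finrank ℚ K - 1) := by
        rw [prod_const, card_erase_of_mem (mem_univ _), card_univ, AlgHom.card]

theorem exists_int_ne_zero_forall_isIntegral_mul {ι : Type*} [Finite ι] (b : ι → K) :
    ∃ q : ℤ, q ≠ 0 ∧ ∀ i, IsIntegral ℤ (q * b i) := by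
  classical
  have := Fintype.ofFinite ι
  obtain ⟨q, hq0, hq⟩ := exists_integral_multiples ℤ ℚ (univ.image b)
  exact ⟨q, hq0, fun i => by simpa [zsmul_eq_mul] using hq (b i) (mem_image_of_mem b (mem_univ i))⟩

theorem exists_forall_norm_embedding_le {ι : Type*} [Finite ι] (b : ι → K) :
    ∃ M : ℝ, 1 ≤ M ∧ ∀ (σ : K →ₐ[ℚ] ℂ) i, ‖σ (b i)‖ ≤ M := by
  obtain ⟨M, hM⟩ := (Set.finite_range fun p : (K →ₐ[ℚ] ℂ) × ι => ‖p.1 (b p.2)‖).bddAbove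
  exact ⟨max M 1, le_max_right _ _, fun σ i => le_max_of_le_left (hM ⟨(σ, i), rfl⟩)⟩

theorem exists_pos_pow_le_norm_aeval {ι : Type*} [Fintype ι] (b : ι → K) {C : ℤ} (hC : 1 ≤ C) :
    ∃ δ : ℝ, 0 < δ ∧ ∀ (k : ℕ) (P : MvPolynomial ι ℤ), P.totalDegree ≤ k →
      (∀ m, |P.coeff m| ≤ C) → ∀ σ₀ : K →ₐ[ℚ] ℂ,
        MvPolynomial.aeval b P = 0 ∨ δ ^ k ≤ ‖σ₀ (MvPolynomial.aeval b P)‖ := by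
  obtain ⟨q, hq0, hq⟩ := exists_int_ne_zero_forall_isIntegral_mul b
  obtain ⟨M, hM1, hM⟩ := exists_forall_norm_embedding_le b
  set E : ℝ := |(q : ℝ)| * (2 ^ Fintype.card ι * C * M)
  set d := Module.finrank ℚ K - 1
  refine ⟨(|(q : ℝ)| * E ^ d)⁻¹, by positivity, fun k P hP hcoeff σ₀ => ?_⟩
  refine or_iff_not_imp_left.mpr fun hx => ?_
  obtain rfl | hk := eq_or_ne k 0
  -- A constant needs its own argument: the bound `C ≤ C ^ k` used below fails at `k = 0`.
  · rw [pow_zero, ← AlgHom.coe_toRingHom, MvPolynomial.map_aeval_int]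
    refine MvPolynomial.one_le_norm_aeval_of_totalDegree_eq_zero (Nat.le_zero.mp hP) ?_
    rw [← MvPolynomial.map_aeval_int]
    exact (map_ne_zero _).mpr hx
  have : CharZero K := charZero_of_injective_algebraMap (algebraMap ℚ K).injective
  set y : K := (q : K) ^ k * MvPolynomial.aeval b P
  have hy : IsIntegral ℤ y :=
    MvPolynomial.isIntegral_pow_mul_aeval (isIntegral_intCast q) hq hP
  have hy0 : y ≠ 0 := mul_ne_zero (pow_ne_zero _ (Int.cast_ne_zero.mpr hq0)) hx
  have hconj : ∀ σ : K →ₐ[ℚ] ℂ, ‖σ y‖ ≤ E ^ k := fun σ =>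
    norm_intCast_pow_mul_aeval_le σ hM1 (hM σ) q hC hk hP hcoeff
  have key := one_le_norm_mul_pow_of_isIntegral hy hy0 hconj σ₀
  rw [inv_pow, inv_eq_one_div, div_le_iff₀ (by positivity)]
  calc (1 : ℝ) ≤ ‖σ₀ y‖ * (E ^ k) ^ d := key
    _ = ‖σ₀ (MvPolynomial.aeval b P)‖ * (|(q : ℝ)| * E ^ d) ^ k := by
        rw [map_mul, map_pow, map_intCast, norm_mul, norm_pow, Complex.norm_intCast]
        ring

end NumberField

/-- Hochman's algebraic separation lemma: if `B` is a finite set of algebraic real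
numbers, then there is `δ = δ(B) > 0` such that any value of a polynomial expression
in the elements of `B` of degree at most `k`, with integer coefficients bounded in
absolute value by a fixed constant, is either `0` or at least `δ^k` in absolute
value. -/
theorem algebraic_polynomial_separation
    {ι : Type*} [Fintype ι] (b : ι → ℝ) (halg : ∀ i, IsAlgebraic ℚ (b i))
    (C : ℤ) (hC : 0 < C) :
    ∃ δ : ℝ, 0 < δ ∧ ∀ (k : ℕ) (P : MvPolynomial ι ℤ),
      P.totalDegree ≤ k → (∀ m, |P.coeff m| ≤ C) →
      MvPolynomial.aeval b P = 0 ∨ δ ^ k ≤ |MvPolynomial.aeval b P| := by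
  set K := IntermediateField.adjoin ℚ (Set.range b)
  have : FiniteDimensional ℚ K := IntermediateField.finiteDimensional_adjoin <| by
    rintro _ ⟨i, rfl⟩
    exact (halg i).isIntegral
  let bK : ι → K := fun i => ⟨b i, IntermediateField.subset_adjoin ℚ _ ⟨i, rfl⟩⟩
  let σ₀ : K →ₐ[ℚ] ℂ := (Complex.ofRealAm.restrictScalars ℚ).comp K.val
  obtain ⟨δ, hδ, hsep⟩ := exists_pos_pow_le_norm_aeval bK hC
  refine ⟨δ, hδ, fun k P hP hcoeff => ?_⟩
  have hb : MvPolynomial.aeval b P = algebraMap K ℝ (MvPolynomial.aeval bK P) :=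
    (MvPolynomial.map_aeval_int (algebraMap K ℝ) bK P).symm
  have hσ₀ : ‖σ₀ (MvPolynomial.aeval bK P)‖ = |MvPolynomial.aeval b P| := by
    rw [hb]
    exact Complex.norm_real _
  rcases hsep k P hP hcoeff σ₀ with h | h
  · exact Or.inl (by rw [hb, h, map_zero])
  · exact Or.inr (hσ₀ ▸ h)
end
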